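/- Let G, H be two families of edge sets in a network, neither possessing a rainbow s–t path, regimented by R = (Q, I) and S = (P, J) respectively. Suppose G \ H = {G_0} and H \ G = {H_0} (as multisets, differing in a single set each). Then either G_0 is inessential in R and H_0 is inessential in S, or I(G_0) = J(H_0). -/

import Mathlib

/-- A directed `s`–`t` path, recorded as its list of (distinct) vertices,
starting at `s` and ending at `t`. -/
def IsStPath {V : Type*} (s t : V) (p : List V) : Prop :=
  p.Nodup ∧ p.head? = some s ∧ p.getLast? = some t

/-- The (directed) edges of a path given by its vertex list. -/
def pathEdges {V : Type*} (p : List V) : List (V × V) := p.zip p.tail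

/-- The inner vertices of a path: all vertices except the first and last. -/
def innerVerts {V : Type*} (p : List V) : List V := p.tail.dropLast

/-- The family `F` of edge sets has a rainbow `s`–`t` path: an `s`–`t` path
whose edges are injectively represented by distinct members of `F`. -/
def HasRainbowStPath {V ι : Type*} (s t : V) (F : ι → Set (V × V)) : Prop :=
  ∃ p : List V, IsStPath s t p ∧
    ∃ g : Fin (pathEdges p).length → ι, Function.Injective g ∧
      ∀ j, (pathEdges p).get j ∈ F (g j)

/-- A regimentation of a family `F` of edge sets of the network `(V, s, t)`:
a set `paths` of internally disjoint `s`–`t` paths covering all vertices,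
together with a map `I` from the essential subfamily `ess` onto `paths`, such
that the edges of `I i` all belong to `F i`, and each path `p` has exactly
`|E(p)| - 1` essential sets assigned to it. -/
structure Regimentation {V ι : Type*} (s t : V) (F : ι → Set (V × V)) where
  paths : Set (List V)
  isPath : ∀ p ∈ paths, IsStPath s t p
  intDisj : ∀ p ∈ paths, ∀ q ∈ paths, p ≠ q →
    ∀ v ∈ innerVerts p, v ∉ innerVerts q
  cover : ∀ v : V, ∃ p ∈ paths, v ∈ p
  ess : Set ι
  I : ι → List V
  I_mem : ∀ i ∈ ess, I i ∈ paths
  I_surj : ∀ p ∈ paths, ∃ i ∈ ess, I i = p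
  I_rep : ∀ i ∈ ess, ∀ e ∈ pathEdges (I i), e ∈ F i
  I_count : ∀ p ∈ paths, {i | i ∈ ess ∧ I i = p}.ncard = (pathEdges p).length - 1

/-!
Without a rainbow `s`–`t` path a regimentation is rigid. Splicing a prefix of one regimenting
path to a suffix of another along an edge of some set `F j`, and colouring the two pieces with sets
assigned to their paths, gives a rainbow path whenever enough colours remain; since a path `q`
carries exactly `|q| - 2` sets, this shows that a set assigned to `q` contains no forward shortcut
of `q`, leaves `q` only from its last inner vertex, and enters `t` only from there. Hence `q` is the
only `s`–`t` path inside any set assigned to it, and a set is assigned to `q` exactly when it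
contains `q`: the regimentation is determined by the family.

So `R` and `S` have the same fibres away from `G₀` and `H₀`. If `G₀` is essential, so is
`H₀` (otherwise `S` would also regiment `G`), and `P = I(G₀)` is a path of `S`: either another
set assigned to `P` is shared, or `P = [s, x, t]` and the path of `S` through `x` is `[s, x, t]`
as well. Comparing the `|P| - 2` sets assigned to `P` on both sides then gives `J(H₀) = P`.
-/

open List

section Paths

variable {V : Type*}

theorem pathEdges_length (p : List V) : (pathEdges p).length = p.length - 1 := by
  simp [pathEdges]

@[simp] theorem pathEdges_cons_cons (x y : V) (l : List V) :
    pathEdges (x :: y :: l) = (x, y) :: pathEdges (y :: l) := rfl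

theorem pathEdges_append_cons (l₁ : List V) (x : V) (l₂ : List V) :
    pathEdges (l₁ ++ x :: l₂) = pathEdges (l₁ ++ [x]) ++ pathEdges (x :: l₂) := by
  induction l₁ with
  | nil => rfl
  | cons a l ih => cases l <;> simp_all [pathEdges]

theorem mem_pathEdges_iff_infix {e : V × V} {l : List V} :
    e ∈ pathEdges l ↔ [e.1, e.2] <:+: l := by
  induction l with
  | nil => simp [pathEdges]
  | cons x l ih =>
    cases l with
    | nil => simp [pathEdges, infix_cons_iff]
    | cons y l => simp [infix_cons_iff, ih, Prod.ext_iff, eq_comm]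

theorem List.IsInfix.pathEdges_subset {l₁ l₂ : List V} (h : l₁ <:+: l₂) :
    pathEdges l₁ ⊆ pathEdges l₂ := fun _ he =>
  mem_pathEdges_iff_infix.2 ((mem_pathEdges_iff_infix.1 he).trans h)

theorem getElem_mem_pathEdges (p : List V) {k : ℕ} (hk : k + 1 < p.length) :
    (p[k], p[k + 1]) ∈ pathEdges p :=
  mem_pathEdges_iff_infix.2 (infix_iff_getElem?.2 ⟨k, by simp; omega, by
    intro i hi; simp at hi; interval_cases i <;> simp [Nat.add_comm]⟩)

end Paths

section StPaths

variable {V : Type*} {s t : V} {p : List V}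

theorem IsStPath.ne_nil (hp : IsStPath s t p) : p ≠ [] := by
  rintro rfl; simp [IsStPath] at hp

theorem IsStPath.getElem_eq_source_iff (hp : IsStPath s t p) {k : ℕ} (hk : k < p.length) :
    p[k] = s ↔ k = 0 := by
  have h0 : p[0]? = some s := head?_eq_getElem? ▸ hp.2.1
  obtain ⟨h0', rfl⟩ := List.getElem?_eq_some_iff.1 h0
  exact hp.1.getElem_inj_iff

theorem IsStPath.getElem_eq_target_iff (hp : IsStPath s t p) {k : ℕ} (hk : k < p.length) :
    p[k] = t ↔ k = p.length - 1 := by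
  have hlast : p[p.length - 1]? = some t := getLast?_eq_getElem? ▸ hp.2.2
  obtain ⟨hl, rfl⟩ := List.getElem?_eq_some_iff.1 hlast
  exact hp.1.getElem_inj_iff

theorem IsStPath.source_ne_target (hp : IsStPath s t p) (h : 2 ≤ p.length) : s ≠ t := by
  intro hst
  have := (hp.getElem_eq_target_iff (k := 0) (by omega)).1
    (hst ▸ (hp.getElem_eq_source_iff (by omega)).2 rfl)
  omega

theorem IsStPath.two_le_length (hp : IsStPath s t p) (hst : s ≠ t) : 2 ≤ p.length := by
  have := (hp.getElem_eq_target_iff (k := 0) (length_pos_iff.2 hp.ne_nil)).not.1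
    (((hp.getElem_eq_source_iff _).2 rfl).trans_ne hst)
  omega

theorem IsStPath.mem_innerVerts (hp : IsStPath s t p) {v : V} (hv : v ∈ p) (hvs : v ≠ s)
    (hvt : v ≠ t) : v ∈ innerVerts p := by
  obtain ⟨k, hk, rfl⟩ := getElem_of_mem hv
  have h0 : k ≠ 0 := fun h => hvs ((hp.getElem_eq_source_iff hk).2 h)
  have h1 : k ≠ p.length - 1 := fun h => hvt ((hp.getElem_eq_target_iff hk).2 h)
  have hk' : k - 1 < p.tail.dropLast.length := by simp; omega
  have : p.tail.dropLast[k - 1] = p[k] := by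
    simp only [getElem_dropLast, getElem_tail]; congr; omega
  exact this ▸ getElem_mem hk'

theorem IsStPath.eq_triple (hp : IsStPath s t p) (h3 : p.length = 3) {x : V} (hx : x ∈ p)
    (hxs : x ≠ s) (hxt : x ≠ t) : p = [s, x, t] := by
  rcases p with _ | ⟨a, _ | ⟨y, _ | ⟨c, _ | ⟨d, l⟩⟩⟩⟩ <;> simp at h3
  obtain ⟨-, ha, hc⟩ := hp
  simp only [head?_cons, getLast?_cons_cons, getLast?_singleton, Option.some.injEq] at ha hc
  subst ha hc
  simp_all

end StPaths

section Rainbow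

variable {V ι : Type*} {s t : V} {F : ι → Set (V × V)}

theorem hasRainbowStPath_of_forall₂ {p : List V} {is : List ι} (hp : IsStPath s t p)
    (hnd : is.Nodup) (h : Forall₂ (fun e i => e ∈ F i) (pathEdges p) is) :
    HasRainbowStPath s t F :=
  ⟨p, hp, fun k => is[k.1]'(h.length_eq ▸ k.2),
    fun _ _ hkl => Fin.ext (hnd.getElem_inj_iff.1 hkl), fun k => h.get k.2 _⟩

theorem forall₂_of_forall_mem {es : List (V × V)} {is : List ι} (hlen : es.length = is.length)
    (h : ∀ i ∈ is, ∀ e ∈ es, e ∈ F i) : Forall₂ (fun e i => e ∈ F i) es is :=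
  forall₂_iff_zip.2 ⟨hlen, fun hab => h _ (of_mem_zip hab).2 _ (of_mem_zip hab).1⟩

/-- The spliced path `q₁[0..a] ++ q₂[b..]` is rainbow. -/
theorem hasRainbowStPath_splice {q₁ q₂ : List V} (hq₁ : IsStPath s t q₁)
    (hq₂ : IsStPath s t q₂) {a b : ℕ} (ha : a < q₁.length) (hb : b < q₂.length)
    (hdisj : (q₁.take (a + 1)).Disjoint (q₂.drop b)) {j : ι} (hj : (q₁[a], q₂[b]) ∈ F j)
    {S₁ S₂ : Finset ι} (hS : Disjoint S₁ S₂) (hj₁ : j ∉ S₁) (hj₂ : j ∉ S₂)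
    (hc₁ : S₁.card = a) (hc₂ : S₂.card = q₂.length - 1 - b)
    (hF₁ : ∀ i ∈ S₁, ∀ e ∈ pathEdges q₁, e ∈ F i)
    (hF₂ : ∀ i ∈ S₂, ∀ e ∈ pathEdges q₂, e ∈ F i) : HasRainbowStPath s t F := by
  have hpre : q₁.take (a + 1) = q₁.take a ++ [q₁[a]] := (take_concat_get' q₁ a ha).symm
  have hsuf : q₂.drop b = q₂[b] :: q₂.drop (b + 1) := drop_eq_getElem_cons hb
  have hp : IsStPath s t (q₁.take (a + 1) ++ q₂.drop b) := by
    refine ⟨nodup_append.2 ⟨(take_sublist _ _).nodup hq₁.1, (drop_sublist _ _).nodup hq₂.1,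
      fun x hx y hy hxy => hdisj hx (hxy ▸ hy)⟩, ?_, ?_⟩
    · simpa [head?_append, head?_take] using Or.inl hq₁.2.1
    · simpa [getLast?_append, getLast?_drop, show ¬ q₂.length ≤ b by omega]
        using Or.inl hq₂.2.2
  refine hasRainbowStPath_of_forall₂ hp (is := S₁.toList ++ j :: S₂.toList) ?_ ?_
  · refine nodup_middle.2 (nodup_cons.2 ⟨by simp [hj₁, hj₂], nodup_append.2
      ⟨S₁.nodup_toList, S₂.nodup_toList, fun x hx y hy hxy =>
        Finset.disjoint_left.1 hS (by simpa using hx) (by simpa [hxy] using hy)⟩⟩)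
  · rw [hsuf, hpre, append_assoc, singleton_append, pathEdges_append_cons, pathEdges_cons_cons,
      ← hpre, ← hsuf]
    refine rel_append (forall₂_of_forall_mem ?_ fun i hi e he => hF₁ i (by simpa using hi) e
      ((take_prefix _ _).isInfix.pathEdges_subset he)) (Forall₂.cons hj
        (forall₂_of_forall_mem ?_ fun i hi e he => hF₂ i (by simpa using hi) e
          ((drop_suffix _ _).isInfix.pathEdges_subset he)))
    · simp [pathEdges_length]; omega
    · simp [pathEdges_length]; omega

end Rainbow

namespace Regimentation

variable {V ι : Type*} {s t : V} {F : ι → Set (V × V)} (R : Regimentation s t F)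
  {q q₁ q₂ : List V} {i j : ι}

def mono {F' : ι → Set (V × V)} (h : ∀ i ∈ R.ess, F i ⊆ F' i) : Regimentation s t F' where
  __ := R
  I_rep i hi e he := h i hi (R.I_rep i hi e he)

theorem eq_of_mem_innerVerts (hq₁ : q₁ ∈ R.paths) (hq₂ : q₂ ∈ R.paths) {v : V}
    (hv₁ : v ∈ innerVerts q₁) (hv₂ : v ∈ innerVerts q₂) : q₁ = q₂ := by
  by_contra hne
  exact R.intDisj q₁ hq₁ q₂ hq₂ hne v hv₁ hv₂

noncomputable def fiber [Finite ι] (q : List V) : Finset ι :=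
  (Set.toFinite {i | i ∈ R.ess ∧ R.I i = q}).toFinset

variable [Finite ι]

theorem mem_fiber : i ∈ R.fiber q ↔ i ∈ R.ess ∧ R.I i = q :=
  Set.Finite.mem_toFinset _

theorem mem_fiber_I (hi : i ∈ R.ess) : i ∈ R.fiber (R.I i) := R.mem_fiber.2 ⟨hi, rfl⟩

theorem mem_paths_of_mem_fiber (hi : i ∈ R.fiber q) : q ∈ R.paths := by
  obtain ⟨hi', rfl⟩ := R.mem_fiber.1 hi
  exact R.I_mem i hi'

theorem edges_mem_of_mem_fiber (hi : i ∈ R.fiber q) : ∀ e ∈ pathEdges q, e ∈ F i := by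
  obtain ⟨hi', rfl⟩ := R.mem_fiber.1 hi
  exact R.I_rep i hi'

theorem card_fiber (hq : q ∈ R.paths) : (R.fiber q).card = q.length - 2 := by
  rw [fiber, ← Set.ncard_eq_toFinset_card, R.I_count q hq, pathEdges_length]
  omega

theorem fiber_nonempty (hq : q ∈ R.paths) : (R.fiber q).Nonempty := by
  obtain ⟨i, hi, rfl⟩ := R.I_surj q hq
  exact ⟨i, R.mem_fiber_I hi⟩

theorem three_le_length (hq : q ∈ R.paths) : 3 ≤ q.length := by
  have := R.card_fiber hq ▸ (R.fiber_nonempty hq).card_pos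
  omega

theorem source_ne_target (R : Regimentation s t F) : s ≠ t := by
  obtain ⟨q, hq, -⟩ := R.cover s
  exact (R.isPath q hq).source_ne_target (by have := R.three_le_length hq; omega)

theorem disjoint_fiber (hne : q₁ ≠ q₂) : Disjoint (R.fiber q₁) (R.fiber q₂) :=
  Finset.disjoint_left.2 fun _ h₁ h₂ =>
    hne ((R.mem_fiber.1 h₁).2.symm.trans (R.mem_fiber.1 h₂).2)

theorem length_eq_three_of_fiber_subsingleton (hq : q ∈ R.paths) {i₀ : ι}
    (h : ∀ i ∈ R.fiber q, i = i₀) : q.length = 3 := by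
  have hle : (R.fiber q).card ≤ 1 :=
    Finset.card_le_one.2 fun a ha b hb => (h a ha).trans (h b hb).symm
  have := (R.fiber_nonempty hq).card_pos
  have := R.card_fiber hq
  omega

theorem card_erase_fiber_lt_of_forward_edge [DecidableEq ι] (hno : ¬ HasRainbowStPath s t F)
    (hq : q ∈ R.paths) {a b : ℕ} (hab : a < b) (hb : b < q.length) (hj : (q[a], q[b]) ∈ F j) :
    ((R.fiber q).erase j).card < a + (q.length - 1 - b) := by
  by_contra! h
  obtain ⟨S, hS, hSc⟩ := Finset.exists_subset_card_eq h
  obtain ⟨S₁, hS₁, hS₁c⟩ := Finset.exists_subset_card_eq (show a ≤ S.card by omega)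
  have hp := R.isPath q hq
  have hjS : j ∉ S := fun h => Finset.notMem_erase j _ (hS h)
  have hSF : ∀ i ∈ S, ∀ e ∈ pathEdges q, e ∈ F i := fun i hi =>
    R.edges_mem_of_mem_fiber (Finset.mem_of_mem_erase (hS hi))
  exact hno (hasRainbowStPath_splice hp hp (by omega) hb (disjoint_take_drop hp.1 hab) hj
    Finset.disjoint_sdiff (fun h => hjS (hS₁ h)) (fun h => hjS (Finset.sdiff_subset h)) hS₁c
    (by rw [Finset.card_sdiff_of_subset hS₁]; omega) (fun i hi => hSF i (hS₁ hi))
    (fun i hi => hSF i (Finset.sdiff_subset hi)))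

theorem forward_edge (hno : ¬ HasRainbowStPath s t F) (hq : q ∈ R.paths) {a b : ℕ}
    (hab : a < b) (hb : b < q.length) (hj : (q[a], q[b]) ∈ F j) :
    b = a + 1 ∧ j ∈ R.fiber q := by
  classical
  have hlt := R.card_erase_fiber_lt_of_forward_edge hno hq hab hb hj
  have hcard := R.card_fiber hq
  have hle := Finset.pred_card_le_card_erase (s := R.fiber q) (a := j)
  refine ⟨by omega, by_contra fun hj' => ?_⟩
  rw [Finset.erase_eq_of_notMem hj'] at hlt
  omega

theorem card_erase_fiber_lt_of_cross_edge [DecidableEq ι] (hno : ¬ HasRainbowStPath s t F)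
    (hq₁ : q₁ ∈ R.paths) (hq₂ : q₂ ∈ R.paths) (hne : q₁ ≠ q₂) {a b : ℕ}
    (ha : a + 1 < q₁.length) (hb0 : 0 < b) (hb : b < q₂.length)
    (hj : (q₁[a], q₂[b]) ∈ F j) :
    ((R.fiber q₁).erase j).card < a ∨ ((R.fiber q₂).erase j).card < q₂.length - 1 - b := by
  by_contra! ⟨h₁, h₂⟩
  obtain ⟨S₁, hS₁, hS₁c⟩ := Finset.exists_subset_card_eq h₁
  obtain ⟨S₂, hS₂, hS₂c⟩ := Finset.exists_subset_card_eq h₂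
  have hp₁ := R.isPath q₁ hq₁
  have hp₂ := R.isPath q₂ hq₂
  have hdisj : (q₁.take (a + 1)).Disjoint (q₂.drop b) := by
    intro x hx₁ hx₂
    obtain ⟨k, hk, rfl⟩ := mem_take_iff_getElem.1 hx₁
    obtain ⟨k', hk', hkk'⟩ := mem_drop_iff_getElem.1 hx₂
    have hxt : q₁[k] ≠ t := fun h => by
      have := (hp₁.getElem_eq_target_iff _).1 h; omega
    have hxs : q₂[b + k'] ≠ s := fun h => by
      have := (hp₂.getElem_eq_source_iff _).1 h; omega
    rw [hkk'] at hxs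
    exact R.intDisj q₁ hq₁ q₂ hq₂ hne _ (hp₁.mem_innerVerts (getElem_mem _) hxs hxt)
      (hp₂.mem_innerVerts (hkk' ▸ getElem_mem _) hxs hxt)
  exact hno (hasRainbowStPath_splice hp₁ hp₂ (by omega) hb hdisj hj
    ((R.disjoint_fiber hne).mono (hS₁.trans (Finset.erase_subset _ _))
      (hS₂.trans (Finset.erase_subset _ _)))
    (fun h => Finset.notMem_erase j _ (hS₁ h)) (fun h => Finset.notMem_erase j _ (hS₂ h))
    hS₁c hS₂c (fun i hi => R.edges_mem_of_mem_fiber (Finset.mem_of_mem_erase (hS₁ hi)))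
    (fun i hi => R.edges_mem_of_mem_fiber (Finset.mem_of_mem_erase (hS₂ hi))))

theorem eq_length_sub_two_of_cross_edge (hno : ¬ HasRainbowStPath s t F) (hj : j ∈ R.fiber q₁)
    (hq₂ : q₂ ∈ R.paths) (hne : q₁ ≠ q₂) {a b : ℕ} (ha : a + 1 < q₁.length)
    (hb0 : 0 < b) (hb : b < q₂.length) (hjab : (q₁[a], q₂[b]) ∈ F j) :
    a = q₁.length - 2 := by
  classical
  have hq₁ := R.mem_paths_of_mem_fiber hj
  have hj₂ : j ∉ R.fiber q₂ := Finset.disjoint_left.1 (R.disjoint_fiber hne) hj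
  rcases R.card_erase_fiber_lt_of_cross_edge hno hq₁ hq₂ hne ha hb0 hb hjab with h | h
  · rw [Finset.card_erase_of_mem hj, R.card_fiber hq₁] at h
    omega
  · rw [Finset.erase_eq_of_notMem hj₂, R.card_fiber hq₂] at h
    omega

theorem getElem?_length_sub_two_of_edge_to_target (hno : ¬ HasRainbowStPath s t F)
    (hj : j ∈ R.fiber q) {u : V} (hu : (u, t) ∈ F j) (hut : u ≠ t) :
    q[q.length - 2]? = some u := by
  classical
  have hq := R.mem_paths_of_mem_fiber hj
  have hp := R.isPath q hq
  have h3 := R.three_le_length hq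
  have hqt : q[q.length - 1] = t := (hp.getElem_eq_target_iff (by omega)).2 rfl
  obtain ⟨q', hq', hu'⟩ := R.cover u
  obtain ⟨c, hc, rfl⟩ := getElem_of_mem hu'
  have hp' := R.isPath q' hq'
  have hc' : c + 1 < q'.length := by
    have := (hp'.getElem_eq_target_iff hc).not.1 hut
    omega
  rw [← hqt] at hu
  by_cases hqq : q' = q
  · subst hqq
    have := (R.forward_edge hno hq (by omega) (by omega) hu).1
    simp [show q'.length - 2 = c by omega, hc]
  · have hj' : j ∉ R.fiber q' := Finset.disjoint_right.1 (R.disjoint_fiber hqq) hj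
    rcases R.card_erase_fiber_lt_of_cross_edge hno hq' hq hqq hc' (by omega) (by omega) hu
      with h | h
    · rw [Finset.erase_eq_of_notMem hj', R.card_fiber hq'] at h
      omega
    · omega

theorem mem_ess_of_source_edge (hno : ¬ HasRainbowStPath s t F) {v : V} (hv : (s, v) ∈ F j)
    (hvs : v ≠ s) : j ∈ R.ess := by
  obtain ⟨q, hq, hvq⟩ := R.cover v
  obtain ⟨b, hb, rfl⟩ := getElem_of_mem hvq
  have hp := R.isPath q hq
  have hq0 : q[0] = s := (hp.getElem_eq_source_iff (by omega)).2 rfl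
  have hb0 : 0 < b := Nat.pos_of_ne_zero fun h => hvs ((hp.getElem_eq_source_iff hb).2 h)
  exact (R.mem_fiber.1 (R.forward_edge hno hq hb0 hb (by rwa [hq0])).2).1

theorem getElem?_succ_eq_of_edge (hno : ¬ HasRainbowStPath s t F) (hi : i ∈ R.fiber q) {a : ℕ}
    (ha : a + 2 < q.length) {v : V} (hv : (q[a], v) ∈ F i) (hvq : v ∉ q.take (a + 1)) :
    q[a + 1]? = some v := by
  have hq := R.mem_paths_of_mem_fiber hi
  have hp := R.isPath q hq
  have hvs : v ≠ s := by
    rintro rfl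
    exact hvq (mem_take_iff_getElem.2 ⟨0, by omega, (hp.getElem_eq_source_iff _).2 rfl⟩)
  obtain ⟨q', hq', hvq'⟩ := R.cover v
  by_cases hqq : q = q'
  · subst hqq
    obtain ⟨b, hb, rfl⟩ := getElem_of_mem hvq'
    have hab : a < b := by
      by_contra hba
      exact hvq (mem_take_iff_getElem.2 ⟨b, by omega, rfl⟩)
    obtain ⟨rfl, -⟩ := R.forward_edge hno hq hab hb hv
    exact getElem?_eq_getElem hb
  · obtain ⟨b, hb, rfl⟩ := getElem_of_mem hvq'
    have hb0 : 0 < b := Nat.pos_of_ne_zero fun h =>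
      hvs (((R.isPath q' hq').getElem_eq_source_iff hb).2 h)
    have := R.eq_length_sub_two_of_cross_edge hno hi hq' hqq (by omega) hb0 hb hv
    omega

theorem getElem?_succ_eq_of_prefix (hno : ¬ HasRainbowStPath s t F) (hi : i ∈ R.fiber q)
    {p : List V} (hp : IsStPath s t p) (hpF : ∀ e ∈ pathEdges p, e ∈ F i)
    (hpen : q[q.length - 2]? = p[p.length - 2]?) {a : ℕ} (ha : a + 1 < p.length)
    (hpre : ∀ k ≤ a, p[k]? = q[k]?) : p[a + 1]? = q[a + 1]? := by
  have hq := R.mem_paths_of_mem_fiber hi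
  have hq' := R.isPath q hq
  have h3 := R.three_le_length hq
  obtain ⟨haq, hqa⟩ := List.getElem?_eq_some_iff.1
    ((hpre a le_rfl).symm.trans (getElem?_eq_getElem (by omega)))
  obtain ⟨_, hpen⟩ := List.getElem?_eq_some_iff.1 (hpen.trans (getElem?_eq_getElem (by omega)))
  have hedge : (q[a], p[a + 1]) ∈ F i := hqa ▸ hpF _ (getElem_mem_pathEdges p ha)
  have hpa : p[a] ≠ t := fun h => by have := (hp.getElem_eq_target_iff _).1 h; omega
  rw [getElem?_eq_getElem ha]
  by_cases hend : a + 1 = p.length - 1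
  · have hqa2 : q.length - 2 = a := hq'.1.getElem_inj_iff.1 <| by
      rw [hpen, hqa, getElem_congr_idx (show p.length - 2 = a by omega)]
    rw [(hp.getElem_eq_target_iff _).2 hend, getElem?_eq_getElem (by omega),
      (hq'.getElem_eq_target_iff _).2 (by omega)]
  · have ha2 : a + 2 < q.length := by
      have : a + 1 < q.length := by
        have := (hq'.getElem_eq_target_iff haq).not.1 (hqa ▸ hpa); omega
      by_contra h
      have := hp.1.getElem_inj_iff.1 (hpen.symm.trans
        ((getElem_congr_idx (show q.length - 2 = a by omega)).trans hqa))
      omega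
    have hvq : p[a + 1] ∉ q.take (a + 1) := by
      intro hmem
      obtain ⟨k, hk, hkv⟩ := mem_take_iff_getElem.1 hmem
      obtain ⟨_, hpk⟩ := List.getElem?_eq_some_iff.1
        ((hpre k (by omega)).trans (getElem?_eq_getElem (by omega)))
      have := hp.1.getElem_inj_iff.1 (hpk.trans hkv)
      omega
    exact (R.getElem?_succ_eq_of_edge hno hi ha2 hedge hvq).symm

theorem eq_of_isStPath_of_edges_mem (hno : ¬ HasRainbowStPath s t F) (hi : i ∈ R.fiber q)
    {p : List V} (hp : IsStPath s t p) (hpF : ∀ e ∈ pathEdges p, e ∈ F i) : p = q := by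
  have hq' := R.isPath q (R.mem_paths_of_mem_fiber hi)
  have hp2 := hp.two_le_length R.source_ne_target
  have hpt : p[p.length - 1] = t := (hp.getElem_eq_target_iff _).2 rfl
  have hlast : (p[p.length - 2], t) ∈ F i := by
    have := hpF _ (getElem_mem_pathEdges p (k := p.length - 2) (by omega))
    rwa [getElem_congr_idx (show p.length - 2 + 1 = p.length - 1 by omega), hpt] at this
  have hpen : q[q.length - 2]? = p[p.length - 2]? :=
    (R.getElem?_length_sub_two_of_edge_to_target hno hi hlast fun h => by
      have := (hp.getElem_eq_target_iff _).1 h; omega).trans (getElem?_eq_getElem _).symm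
  have key : ∀ a < p.length, p[a]? = q[a]? := by
    intro a
    induction a using Nat.strong_induction_on with
    | _ a ih =>
      cases a with
      | zero => exact fun _ => by rw [← head?_eq_getElem?, ← head?_eq_getElem?, hp.2.1, hq'.2.1]
      | succ a =>
        exact fun ha => R.getElem?_succ_eq_of_prefix hno hi hp hpF hpen ha
          fun k hk => ih k (by omega) (by omega)
  have hlen : p.length = q.length := by
    obtain ⟨h, hqt⟩ := List.getElem?_eq_some_iff.1
      ((key (p.length - 1) (by omega)).symm.trans (getElem?_eq_getElem (by omega)))
    have := (hq'.getElem_eq_target_iff h).1 (hqt.trans hpt)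
    omega
  exact ext_getElem? fun n => if hn : n < p.length then key n hn else by
    rw [getElem?_eq_none (by omega), getElem?_eq_none (by omega)]

theorem mem_fiber_iff (hno : ¬ HasRainbowStPath s t F) :
    i ∈ R.fiber q ↔ IsStPath s t q ∧ ∀ e ∈ pathEdges q, e ∈ F i := by
  refine ⟨fun hi => ⟨R.isPath q (R.mem_paths_of_mem_fiber hi), R.edges_mem_of_mem_fiber hi⟩,
    fun ⟨hq, hqF⟩ => ?_⟩
  have h1 : 1 < q.length := hq.two_le_length R.source_ne_target
  have hq0 : q[0] = s := (hq.getElem_eq_source_iff _).2 rfl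
  have hi : i ∈ R.ess := R.mem_ess_of_source_edge hno (hq0 ▸ hqF _ (getElem_mem_pathEdges q h1))
    fun h => absurd ((hq.getElem_eq_source_iff _).1 h) one_ne_zero
  rw [R.eq_of_isStPath_of_edges_mem hno (R.mem_fiber_I hi) hq hqF]
  exact R.mem_fiber_I hi

section Exchange

variable {G H : ι → Set (V × V)} {i₀ : ι}
  (RG : Regimentation s t G) (RH : Regimentation s t H)

theorem mem_fiber_iff_mem_fiber (hnoG : ¬ HasRainbowStPath s t G)
    (hnoH : ¬ HasRainbowStPath s t H) (hGH : ∀ i ≠ i₀, G i = H i) {q : List V} {i : ι}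
    (hi : i ≠ i₀) : i ∈ RG.fiber q ↔ i ∈ RH.fiber q := by
  rw [RG.mem_fiber_iff hnoG, RH.mem_fiber_iff hnoH, hGH i hi]

theorem mem_ess_of_mem_ess (hnoG : ¬ HasRainbowStPath s t G) (hGH : ∀ i ≠ i₀, G i = H i)
    (h : i₀ ∈ RG.ess) : i₀ ∈ RH.ess := by
  by_contra hH
  let RH' : Regimentation s t G := RH.mono fun i hi => (hGH i (ne_of_mem_of_not_mem hi hH)).ge
  have := (RH'.mem_fiber_iff hnoG).2 ((RG.mem_fiber_iff hnoG).1 (RG.mem_fiber_I h))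
  exact hH (RH'.mem_fiber.1 this).1

theorem I_eq_of_I_mem_paths (hnoG : ¬ HasRainbowStPath s t G) (hnoH : ¬ HasRainbowStPath s t H)
    (hGH : ∀ i ≠ i₀, G i = H i) (h : i₀ ∈ RG.ess) (hP : RG.I i₀ ∈ RH.paths) :
    RH.I i₀ = RG.I i₀ := by
  classical
  have herase : ((RG.fiber (RG.I i₀)).erase i₀) = (RH.fiber (RG.I i₀)).erase i₀ := by
    ext i
    by_cases hi : i = i₀
    · simp [hi]
    · simp [hi, mem_fiber_iff_mem_fiber RG RH hnoG hnoH hGH hi]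
  by_contra hne
  have hnot : i₀ ∉ RH.fiber (RG.I i₀) := fun h' => hne (RH.mem_fiber.1 h').2
  have hcard := congrArg Finset.card herase
  rw [Finset.card_erase_of_mem (RG.mem_fiber_I h), Finset.erase_eq_of_notMem hnot,
    RG.card_fiber (RG.I_mem i₀ h), RH.card_fiber hP] at hcard
  have := RG.three_le_length (RG.I_mem i₀ h)
  omega

theorem I_eq_of_mem_ess (hnoG : ¬ HasRainbowStPath s t G) (hnoH : ¬ HasRainbowStPath s t H)
    (hGH : ∀ i ≠ i₀, G i = H i) (h : i₀ ∈ RG.ess) : RG.I i₀ = RH.I i₀ := by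
  have hPG : RG.I i₀ ∈ RG.paths := RG.I_mem i₀ h
  refine (I_eq_of_I_mem_paths RG RH hnoG hnoH hGH h ?_).symm
  by_cases hPi : ∃ i ∈ RG.fiber (RG.I i₀), i ≠ i₀
  · obtain ⟨i, hi, hne⟩ := hPi
    exact RH.mem_paths_of_mem_fiber ((mem_fiber_iff_mem_fiber RG RH hnoG hnoH hGH hne).1 hi)
  push Not at hPi
  set P := RG.I i₀
  have hp := RG.isPath P hPG
  have hP3 := RG.length_eq_three_of_fiber_subsingleton hPG hPi
  have hxs : P[1] ≠ s := fun h => absurd ((hp.getElem_eq_source_iff _).1 h) one_ne_zero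
  have hxt : P[1] ≠ t := fun h => by have := (hp.getElem_eq_target_iff _).1 h; omega
  obtain ⟨q, hq, hxq⟩ := RH.cover P[1]
  have hq' := RH.isPath q hq
  by_cases hqi : ∃ i ∈ RH.fiber q, i ≠ i₀
  · obtain ⟨i, hi, hne⟩ := hqi
    have hqG := RG.mem_paths_of_mem_fiber ((mem_fiber_iff_mem_fiber RG RH hnoG hnoH hGH hne).2 hi)
    rwa [RG.eq_of_mem_innerVerts hPG hqG (hp.mem_innerVerts (getElem_mem _) hxs hxt)
      (hq'.mem_innerVerts hxq hxs hxt)]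
  · push Not at hqi
    rwa [hp.eq_triple hP3 (getElem_mem _) hxs hxt,
      ← hq'.eq_triple (RH.length_eq_three_of_fiber_subsingleton hq hqi) hxq hxs hxt]

end Exchange

end Regimentation

/-- The exchange lemma: let `G` and `H` be families of edge sets agreeing
except in their last member (`G₀ = G (last m)`, `H₀ = H (last m)`), neither
having a rainbow `s`–`t` path, regimented by `RG` and `RH` respectively.
Then either `G₀` and `H₀` are both inessential, or the paths assigned to them
coincide: `RG.I G₀ = RH.I H₀`. -/
theorem stmt_19 {V : Type*} (s t : V) (m : ℕ)
    (G H : Fin (m + 1) → Set (V × V))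
    (hagree : ∀ i : Fin m, G i.castSucc = H i.castSucc)
    (RG : Regimentation s t G) (RH : Regimentation s t H)
    (hnoG : ¬ HasRainbowStPath s t G) (hnoH : ¬ HasRainbowStPath s t H) :
    (Fin.last m ∉ RG.ess ∧ Fin.last m ∉ RH.ess) ∨
      RG.I (Fin.last m) = RH.I (Fin.last m) := by
  have hGH : ∀ i ≠ Fin.last m, G i = H i := fun i hi => by
    obtain ⟨j, rfl⟩ := Fin.exists_castSucc_eq.2 hi
    exact hagree j
  by_cases hG : Fin.last m ∈ RG.ess
  · exact Or.inr (RG.I_eq_of_mem_ess RH hnoG hnoH hGH hG)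
  · exact Or.inl ⟨hG, fun hH =>
      hG (RH.mem_ess_of_mem_ess RG hnoH (fun i hi => (hGH i hi).symm) hH)⟩
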